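/- arXiv:2405.20678 — 2 statements merged into one kernel-verified Lean document; each statement's English description precedes it below -/
import Mathlib

section
/- For all x ∈ (0,1) and α ∈ (0,1) satisfying 1 + x·ln α ≥ 0, we have (1 − α^x)/x ≥ −(ln α)/2. -/
/-! Put `s = -x log α ∈ [0, 1]`, so that `α ^ x = exp (-s)`. From `1 + s ≤ exp s` one gets
`exp (-s) ≤ 1 / (1 + s)`, and `1 / (1 + s) ≤ 1 - s / 2` is equivalent to `s (1 - s) ≥ 0`. -/

namespace Real

theorem exp_neg_le_inv_one_add {s : ℝ} (hs : -1 < s) : exp (-s) ≤ (1 + s)⁻¹ := by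
  rw [exp_neg]
  exact inv_anti₀ (by linarith) (by linarith [add_one_le_exp s])

theorem exp_neg_le_one_sub_half {s : ℝ} (hs0 : 0 ≤ s) (hs1 : s ≤ 1) :
    exp (-s) ≤ 1 - s / 2 := by
  have hpos : 0 < 1 + s := by linarith
  calc exp (-s) ≤ (1 + s)⁻¹ := exp_neg_le_inv_one_add (by linarith)
    _ ≤ 1 - s / 2 := by
      rw [inv_le_iff_one_le_mul₀' hpos]
      nlinarith [mul_nonneg hs0 (sub_nonneg.mpr hs1)]

theorem neg_mul_log_div_two_le_one_sub_rpow {x α : ℝ} (hx : 0 ≤ x) (hα : 0 < α) (hα1 : α ≤ 1)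
    (h : 0 ≤ 1 + x * log α) : -(x * log α) / 2 ≤ 1 - α ^ x := by
  have hs0 : 0 ≤ -(x * log α) :=
    neg_nonneg.mpr (mul_nonpos_of_nonneg_of_nonpos hx (log_nonpos hα.le hα1))
  have key := exp_neg_le_one_sub_half hs0 (by linarith)
  rw [neg_neg, mul_comm] at key
  rw [rpow_def_of_pos hα]
  linarith

end Real

theorem one_sub_rpow_div_ge_general (x α : ℝ) (hx : 0 < x)
    (hα : 0 < α) (hα1 : α < 1) (h : 1 + x * Real.log α ≥ 0) :
    (1 - α ^ x) / x ≥ -(Real.log α) / 2 := by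
  rw [ge_iff_le, le_div_iff₀ hx]
  linarith [Real.neg_mul_log_div_two_le_one_sub_rpow hx.le hα hα1.le h]

theorem one_sub_rpow_div_ge (x α : ℝ) (hx : 0 < x) (hx1 : x < 1)
    (hα : 0 < α) (hα1 : α < 1) (h : 1 + x * Real.log α ≥ 0) :
    (1 - α ^ x) / x ≥ -(Real.log α) / 2 :=
  one_sub_rpow_div_ge_general x α hx hα hα1 h
end

section
/- Let p be a sequence of reals with p_τ ∈ [0,1] for all τ, and define N_t = 1 + (1/2)·∑_{τ=1}^{t} p_τ. Then for every T ≥ 1, ∑_{t=1}^T p_t / N_t ≤ 2·log(T + 2). -/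
/-!
The sum is a right-endpoint Riemann sum for `∫ dN / N`: with `N_t = 1 + ∑_{τ ≤ t} p_τ / 2` each term
`p_t / N_t = 2 (N_t - N_{t-1}) / N_t` is at most `2 (log N_t - log N_{t-1})`, because
`1 - 1/x ≤ log x`. The sum therefore telescopes to at most `2 log N_T`, and `N_T ≤ 1 + T/2`.
-/

open Finset Real

lemma sub_div_le_log_sub_log {x y : ℝ} (hx : 0 < x) (hy : 0 < y) :
    (y - x) / y ≤ log y - log x := by
  have h := one_sub_inv_le_log_of_pos (div_pos hy hx)
  rwa [log_div hy.ne' hx.ne', inv_div, one_sub_div hy.ne'] at h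

lemma sum_div_partial_sum_le_log {a : ℕ → ℝ} {c : ℝ} (hc : 0 < c) (ha : ∀ t, 0 ≤ a t) (n : ℕ) :
    ∑ t ∈ Icc 1 n, a t / (c + ∑ τ ∈ Icc 1 t, a τ) ≤ log (c + ∑ τ ∈ Icc 1 n, a τ) - log c := by
  have hpos : ∀ t, 0 < c + ∑ τ ∈ Icc 1 t, a τ := fun t =>
    add_pos_of_pos_of_nonneg hc (sum_nonneg fun τ _ => ha τ)
  induction n with
  | zero => simp
  | succ n ih =>
    have hstep := sub_div_le_log_sub_log (hpos n) (hpos (n + 1))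
    have hincr : (c + ∑ τ ∈ Icc 1 (n + 1), a τ) - (c + ∑ τ ∈ Icc 1 n, a τ) = a (n + 1) := by
      rw [sum_Icc_succ_top (by omega)]; ring
    rw [hincr] at hstep
    rw [sum_Icc_succ_top (by omega)]
    linarith

theorem sum_p_over_N_le_general (T : ℕ) (p : ℕ → ℝ)
    (hp : ∀ τ, 0 ≤ p τ ∧ p τ ≤ 1) :
    ∑ t ∈ Finset.Icc 1 T, p t / (1 + (1 / 2) * ∑ τ ∈ Finset.Icc 1 t, p τ)
      ≤ 2 * Real.log (T + 2) := by
  have half_sum (t : ℕ) : (1 / 2) * ∑ τ ∈ Icc 1 t, p τ = ∑ τ ∈ Icc 1 t, p τ / 2 := by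
    rw [mul_sum]; ring_nf
  have hsum_le : ∑ τ ∈ Icc 1 T, p τ / 2 ≤ T := by
    calc ∑ τ ∈ Icc 1 T, p τ / 2 ≤ ∑ τ ∈ Icc 1 T, (1 : ℝ) :=
          sum_le_sum fun τ _ => by linarith [hp τ]
      _ = T := by simp
  have hsum_nonneg : 0 ≤ ∑ τ ∈ Icc 1 T, p τ / 2 := sum_nonneg fun τ _ => by linarith [hp τ]
  calc ∑ t ∈ Icc 1 T, p t / (1 + (1 / 2) * ∑ τ ∈ Icc 1 t, p τ)
      = 2 * ∑ t ∈ Icc 1 T, p t / 2 / (1 + ∑ τ ∈ Icc 1 t, p τ / 2) := by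
        simp only [half_sum, mul_sum]; ring_nf
    _ ≤ 2 * (log (1 + ∑ τ ∈ Icc 1 T, p τ / 2) - log 1) := by
        gcongr
        exact sum_div_partial_sum_le_log one_pos (fun t => by linarith [hp t]) T
    _ ≤ 2 * log (T + 2) := by
        rw [log_one, sub_zero]
        gcongr 2 * ?_
        exact log_le_log (by linarith) (by linarith)

theorem sum_p_over_N_le (T : ℕ) (hT : 1 ≤ T) (p : ℕ → ℝ)
    (hp : ∀ τ, 0 ≤ p τ ∧ p τ ≤ 1) :
    ∑ t ∈ Finset.Icc 1 T, p t / (1 + (1 / 2) * ∑ τ ∈ Finset.Icc 1 t, p τ)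
      ≤ 2 * Real.log (T + 2) :=
  sum_p_over_N_le_general T p hp
end
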